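/- arXiv:2311.18573 — 3 statements merged into one kernel-verified Lean document; each statement's English description precedes it below -/
import Mathlib

section
/- Let n ≥ 1 and 1 < p < ∞, and define V_p : ℝⁿ → ℝⁿ by V_p(η) = (1+|η|²)^((p−2)/4) η. Then there exists a constant C = C(n,p) > 0 such that for all ξ, η ∈ ℝⁿ with ξ ≠ η one has C⁻¹ (1+|ξ|²+|η|²)^((p−2)/2) ≤ |V_p(ξ) − V_p(η)|² / |ξ − η|² ≤ C (1+|ξ|²+|η|²)^((p−2)/2). -/
/-!
Put `a = (1 + ‖ξ‖²)^((p-2)/4)`, `b = (1 + ‖η‖²)^((p-2)/4)` and let `‖η‖ ≤ ‖ξ‖`. The identity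
`‖a ξ - b η‖² = a b ‖ξ - η‖² + (a - b) (a ‖ξ‖² - b ‖η‖²)` shows that `‖V_p ξ - V_p η‖²` is affine
in `‖ξ - η‖²`, which ranges over `[(‖ξ‖ - ‖η‖)², (‖ξ‖ + ‖η‖)²]`. So both bounds reduce to the
collinear configurations, i.e. to the one-variable profile `t ↦ (1 + t²)^((p-2)/4) t`, whose
derivative lies between `min 1 (p/2)` and `max 1 (p/2)` times `(1 + t²)^((p-2)/4)`; the mean value
theorem then compares `a ‖ξ‖ ∓ b ‖η‖` with `a (‖ξ‖ ∓ ‖η‖)`. Finally `1 + ‖ξ‖² + ‖η‖²` lies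
between `1 + ‖ξ‖²` and twice that.
-/

open Real Set

noncomputable def Vp {E : Type*} [NormedAddCommGroup E] [NormedSpace ℝ E] (p : ℝ) (ξ : E) : E :=
  (1 + ‖ξ‖ ^ 2) ^ ((p - 2) / 4) • ξ

noncomputable def radialVp (p t : ℝ) : ℝ := (1 + t ^ 2) ^ ((p - 2) / 4) * t

theorem hasDerivAt_radialVp (p x : ℝ) :
    HasDerivAt (radialVp p) ((1 + x ^ 2) ^ ((p - 2) / 4 - 1) * (1 + p / 2 * x ^ 2)) x := by
  have hpos : 0 < 1 + x ^ 2 := by positivity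
  have h : HasDerivAt (fun y => (1 + y ^ 2) ^ ((p - 2) / 4) * y) _ x :=
    (((hasDerivAt_pow 2 x).const_add 1).rpow_const (Or.inl hpos.ne')).mul (hasDerivAt_id x)
  refine h.congr_deriv ?_
  rw [rpow_sub_one hpos.ne']
  field_simp
  ring

theorem radialVp_deriv_bounds (p x : ℝ) :
    min 1 (p / 2) * (1 + x ^ 2) ^ ((p - 2) / 4) ≤
        (1 + x ^ 2) ^ ((p - 2) / 4 - 1) * (1 + p / 2 * x ^ 2) ∧
      (1 + x ^ 2) ^ ((p - 2) / 4 - 1) * (1 + p / 2 * x ^ 2) ≤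
        max 1 (p / 2) * (1 + x ^ 2) ^ ((p - 2) / 4) := by
  have hpos : 0 < 1 + x ^ 2 := by positivity
  have hw : 0 ≤ (1 + x ^ 2) ^ ((p - 2) / 4) := by positivity
  -- the ratio is a convex combination of `1` and `p / 2`
  have hlo : min 1 (p / 2) ≤ (1 + p / 2 * x ^ 2) / (1 + x ^ 2) := by
    rw [le_div_iff₀ hpos]
    nlinarith [min_le_left 1 (p / 2), min_le_right 1 (p / 2), sq_nonneg x]
  have hhi : (1 + p / 2 * x ^ 2) / (1 + x ^ 2) ≤ max 1 (p / 2) := by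
    rw [div_le_iff₀ hpos]
    nlinarith [le_max_left 1 (p / 2), le_max_right 1 (p / 2), sq_nonneg x]
  rw [rpow_sub_one hpos.ne', div_mul_eq_mul_div, mul_div_assoc]
  exact ⟨by simpa only [mul_comm] using mul_le_mul_of_nonneg_left hlo hw,
    by simpa only [mul_comm] using mul_le_mul_of_nonneg_left hhi hw⟩

theorem differentiable_radialVp (p : ℝ) : Differentiable ℝ (radialVp p) :=
  fun x => (hasDerivAt_radialVp p x).differentiableAt

theorem mul_sub_le_radialVp_sub {p τ σ : ℝ} (hp : 0 < p) (hτ : 0 ≤ τ) (hτσ : τ ≤ σ) :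
    min 1 (p / 2) * (1 + σ ^ 2) ^ ((p - 2) / 4) * (σ - τ) ≤ radialVp p σ - radialVp p τ := by
  rcases le_total 2 p with h2p | hp2
  · have hba : (1 + τ ^ 2) ^ ((p - 2) / 4) ≤ (1 + σ ^ 2) ^ ((p - 2) / 4) :=
      rpow_le_rpow (by positivity) (by nlinarith) (by linarith)
    have hmin_le : min 1 (p / 2) * (1 + σ ^ 2) ^ ((p - 2) / 4) * (σ - τ) ≤
        (1 + σ ^ 2) ^ ((p - 2) / 4) * (σ - τ) :=
      mul_le_mul_of_nonneg_right (mul_le_of_le_one_left (by positivity) (min_le_left _ _))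
        (by linarith)
    unfold radialVp
    nlinarith [mul_le_mul_of_nonneg_right hba hτ]
  · refine (convex_Icc τ σ).mul_sub_le_image_sub_of_le_deriv
      (differentiable_radialVp p).continuous.continuousOn
      (differentiable_radialVp p).differentiableOn (fun x hx => ?_) τ
      (left_mem_Icc.2 hτσ) σ (right_mem_Icc.2 hτσ) hτσ
    rw [interior_Icc] at hx
    rw [(hasDerivAt_radialVp p x).deriv]
    have hmin : 0 < min 1 (p / 2) := lt_min one_pos (half_pos hp)
    have hx2 : 1 + x ^ 2 ≤ 1 + σ ^ 2 := by nlinarith [hx.1, hx.2]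
    calc min 1 (p / 2) * (1 + σ ^ 2) ^ ((p - 2) / 4)
        ≤ min 1 (p / 2) * (1 + x ^ 2) ^ ((p - 2) / 4) :=
          mul_le_mul_of_nonneg_left
            (rpow_le_rpow_of_nonpos (by positivity) hx2 (by linarith)) hmin.le
      _ ≤ _ := (radialVp_deriv_bounds p x).1

theorem radialVp_sub_le_mul_sub {p τ σ : ℝ} (hτ : 0 ≤ τ) (hτσ : τ ≤ σ) :
    radialVp p σ - radialVp p τ ≤ max 2 (p / 2) * (1 + σ ^ 2) ^ ((p - 2) / 4) * (σ - τ) := by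
  have mvt : ∀ C, (∀ x ∈ Ioo τ σ, (1 + x ^ 2) ^ ((p - 2) / 4) ≤ C) →
      radialVp p σ - radialVp p τ ≤ max 1 (p / 2) * C * (σ - τ) := fun C hC =>
    (convex_Icc τ σ).image_sub_le_mul_sub_of_deriv_le
      (differentiable_radialVp p).continuous.continuousOn
      (differentiable_radialVp p).differentiableOn (fun x hx => by
        rw [interior_Icc] at hx
        rw [(hasDerivAt_radialVp p x).deriv]
        exact (radialVp_deriv_bounds p x).2.trans
          (mul_le_mul_of_nonneg_left (hC x hx) (by positivity)))
      τ (left_mem_Icc.2 hτσ) σ (right_mem_Icc.2 hτσ) hτσ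
  have hστ : 0 ≤ σ - τ := by linarith
  rcases le_total 2 p with h2p | hp2
  · refine (mvt ((1 + σ ^ 2) ^ ((p - 2) / 4)) fun x hx =>
      rpow_le_rpow (by positivity) ?_ (by linarith)).trans ?_
    · nlinarith [hx.1, hx.2]
    · gcongr
      norm_num
  · have hmvt := mvt ((1 + τ ^ 2) ^ ((p - 2) / 4)) fun x hx =>
      rpow_le_rpow_of_nonpos (by positivity) (by nlinarith [hx.1, hx.2]) (by linarith)
    rw [max_eq_left (by linarith : p / 2 ≤ 1), one_mul] at hmvt
    unfold radialVp at hmvt ⊢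
    set a := (1 + σ ^ 2) ^ ((p - 2) / 4)
    set b := (1 + τ ^ 2) ^ ((p - 2) / 4)
    have ha : 0 ≤ a := by positivity
    have hmax : 2 * a * (σ - τ) ≤ max 2 (p / 2) * a * (σ - τ) := by
      gcongr; exact le_max_left _ _
    rcases le_total b (2 * a) with hb | hb
    · nlinarith [mul_le_mul_of_nonneg_right hb hστ]
    · -- the mean value bound `b (σ - τ)` is too weak here, but `a σ - b τ ≤ a σ - 2 a τ`
      nlinarith [mul_le_mul_of_nonneg_right hb hτ, mul_nonneg ha (hτ.trans hτσ)]

theorem rpow_le_two_rpow_abs {t : ℝ} (s : ℝ) (h1 : 1 ≤ t) (h2 : t ≤ 2) : t ^ s ≤ 2 ^ |s| :=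
  (rpow_le_rpow_of_exponent_le h1 (le_abs_self s)).trans
    (rpow_le_rpow (by linarith) h2 (abs_nonneg s))

theorem rpow_le_two_rpow_abs_mul_rpow {A M : ℝ} (r : ℝ) (hA : 0 < A) (h1 : A ≤ M)
    (h2 : M ≤ 2 * A) : M ^ r ≤ 2 ^ |r| * A ^ r ∧ A ^ r ≤ 2 ^ |r| * M ^ r := by
  have ht1 : 1 ≤ M / A := (one_le_div hA).2 h1
  have ht2 : M / A ≤ 2 := (div_le_iff₀ hA).2 h2
  have hMA : ∀ s : ℝ, M ^ s = (M / A) ^ s * A ^ s := fun s => by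
    rw [← mul_rpow (by positivity) hA.le, div_mul_cancel₀ M hA.ne']
  constructor
  · rw [hMA r]
    gcongr
    exact rpow_le_two_rpow_abs r ht1 ht2
  · have hAM : A ^ r = (M / A) ^ (-r) * M ^ r := by
      rw [hMA r, ← mul_assoc, ← rpow_add (by positivity), neg_add_cancel, rpow_zero, one_mul]
    rw [hAM]
    refine mul_le_mul_of_nonneg_right ?_ (rpow_nonneg (by linarith) r)
    simpa only [abs_neg] using rpow_le_two_rpow_abs (-r) ht1 ht2

theorem sq_norm_sub_mem_Icc {E : Type*} [SeminormedAddCommGroup E] (x y : E) :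
    ‖x - y‖ ^ 2 ∈ Icc ((‖x‖ - ‖y‖) ^ 2) ((‖x‖ + ‖y‖) ^ 2) := by
  rw [← sq_abs (‖x‖ - ‖y‖)]
  exact ⟨pow_le_pow_left₀ (abs_nonneg _) (abs_norm_sub_norm_le x y) 2,
    pow_le_pow_left₀ (norm_nonneg _) (norm_sub_le x y) 2⟩

theorem mul_le_of_le_at_endpoints {α β c L U D : ℝ} (hD : D ∈ Icc L U)
    (hL : c * L ≤ α * L + β) (hU : c * U ≤ α * U + β) : c * D ≤ α * D + β := by
  rcases le_total c α with h | h <;> nlinarith [hD.1, hD.2]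

section InnerProduct

variable {E : Type*} [NormedAddCommGroup E] [InnerProductSpace ℝ E]

theorem norm_smul_sub_smul_sq (a b : ℝ) (x y : E) :
    ‖a • x - b • y‖ ^ 2 = a * b * ‖x - y‖ ^ 2 + (a - b) * (a * ‖x‖ ^ 2 - b * ‖y‖ ^ 2) := by
  rw [norm_sub_sq_real, norm_sub_sq_real, norm_smul, norm_smul, real_inner_smul_left,
    real_inner_smul_right, mul_pow, mul_pow, Real.norm_eq_abs, Real.norm_eq_abs, sq_abs, sq_abs]
  ring

theorem mul_sq_le_norm_smul_sub_smul_sq {a b c : ℝ} {x y : E}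
    (hpar : c * (‖x‖ - ‖y‖) ^ 2 ≤ (a * ‖x‖ - b * ‖y‖) ^ 2)
    (hanti : c * (‖x‖ + ‖y‖) ^ 2 ≤ (a * ‖x‖ + b * ‖y‖) ^ 2) :
    c * ‖x - y‖ ^ 2 ≤ ‖a • x - b • y‖ ^ 2 := by
  rw [norm_smul_sub_smul_sq]
  exact mul_le_of_le_at_endpoints (sq_norm_sub_mem_Icc x y)
    (by linear_combination hpar) (by linear_combination hanti)

theorem norm_smul_sub_smul_sq_le_mul_sq {a b C : ℝ} {x y : E}
    (hpar : (a * ‖x‖ - b * ‖y‖) ^ 2 ≤ C * (‖x‖ - ‖y‖) ^ 2)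
    (hanti : (a * ‖x‖ + b * ‖y‖) ^ 2 ≤ C * (‖x‖ + ‖y‖) ^ 2) :
    ‖a • x - b • y‖ ^ 2 ≤ C * ‖x - y‖ ^ 2 := by
  rw [norm_smul_sub_smul_sq]
  linarith [mul_le_of_le_at_endpoints (sq_norm_sub_mem_Icc x y) (c := -C) (α := -(a * b))
    (β := -((a - b) * (a * ‖x‖ ^ 2 - b * ‖y‖ ^ 2)))
    (by linear_combination hpar) (by linear_combination hanti)]
theorem Vp_sub_sq_bounds_of_norm_le {p : ℝ} (hp : 0 < p) {ξ η : E} (h : ‖η‖ ≤ ‖ξ‖) :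
    (min 1 (p / 2) / 2) ^ 2 * (1 + ‖ξ‖ ^ 2) ^ ((p - 2) / 2) * ‖ξ - η‖ ^ 2 ≤
        ‖Vp p ξ - Vp p η‖ ^ 2 ∧
      ‖Vp p ξ - Vp p η‖ ^ 2 ≤
        (max 2 (p / 2)) ^ 2 * (1 + ‖ξ‖ ^ 2) ^ ((p - 2) / 2) * ‖ξ - η‖ ^ 2 := by
  have hτ := norm_nonneg η
  have hsub_lo := mul_sub_le_radialVp_sub hp hτ h
  have hsub_hi := radialVp_sub_le_mul_sub (p := p) hτ h
  unfold radialVp at hsub_lo hsub_hi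
  unfold Vp
  set σ := ‖ξ‖
  set τ := ‖η‖
  set a := (1 + σ ^ 2) ^ ((p - 2) / 4)
  set b := (1 + τ ^ 2) ^ ((p - 2) / 4)
  set c := min 1 (p / 2) / 2
  set K := max 2 (p / 2)
  have ha : 0 ≤ a := by positivity
  have hb : 0 ≤ b := by positivity
  have hmin : 0 < min 1 (p / 2) := lt_min one_pos (by linarith)
  have hστ : 0 ≤ σ - τ := sub_nonneg.2 h
  have hcle : c ≤ min 1 (p / 2) := half_le_self hmin.le
  have hc_half : c ≤ 1 / 2 := by
    show min 1 (p / 2) / 2 ≤ 1 / 2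
    linarith [min_le_left 1 (p / 2)]
  have ha2 : a ^ 2 = (1 + σ ^ 2) ^ ((p - 2) / 2) := by
    rw [← rpow_mul_natCast (by positivity)]; ring_nf
  have hsum_lo : c * a * (σ + τ) ≤ a * σ + b * τ := by
    have : c * a * (σ + τ) ≤ 1 / 2 * a * (σ + τ) := by gcongr
    nlinarith [mul_nonneg hb hτ]
  have hsum_hi : a * σ + b * τ ≤ K * a * (σ + τ) := by
    have : 2 * a * (σ + τ) ≤ K * a * (σ + τ) := by gcongr; exact le_max_left _ _
    nlinarith [mul_nonneg hmin.le (mul_nonneg ha hστ)]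
  rw [← ha2, ← mul_pow c a, ← mul_pow K a]
  constructor
  · apply mul_sq_le_norm_smul_sub_smul_sq
    · rw [← mul_pow]
      exact pow_le_pow_left₀ (by positivity) ((by gcongr : c * a * (σ - τ) ≤ _).trans hsub_lo) 2
    · rw [← mul_pow]
      exact pow_le_pow_left₀ (by positivity) hsum_lo 2
  · apply norm_smul_sub_smul_sq_le_mul_sq
    · rw [← mul_pow]
      have : 0 ≤ min 1 (p / 2) * a * (σ - τ) := by positivity
      exact pow_le_pow_left₀ (by linarith) hsub_hi 2
    · rw [← mul_pow]
      exact pow_le_pow_left₀ (by positivity) hsum_hi 2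

theorem exists_Vp_sub_sq_comparable (p : ℝ) (hp : 0 < p) :
    ∃ C > 0, ∀ ξ η : E,
      C⁻¹ * (1 + ‖ξ‖ ^ 2 + ‖η‖ ^ 2) ^ ((p - 2) / 2) * ‖ξ - η‖ ^ 2 ≤ ‖Vp p ξ - Vp p η‖ ^ 2 ∧
        ‖Vp p ξ - Vp p η‖ ^ 2 ≤ C * (1 + ‖ξ‖ ^ 2 + ‖η‖ ^ 2) ^ ((p - 2) / 2) * ‖ξ - η‖ ^ 2 := by
  set c := (min 1 (p / 2) / 2) ^ 2
  set K := (max 2 (p / 2)) ^ 2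
  set κ := (2 : ℝ) ^ |(p - 2) / 2|
  have hc : 0 < c := by have := lt_min one_pos (half_pos hp); positivity
  refine ⟨κ * (K + c⁻¹), by positivity, fun ξ η => ?_⟩
  wlog h : ‖η‖ ≤ ‖ξ‖ generalizing ξ η
  · obtain ⟨hlo, hhi⟩ := this η ξ (le_of_not_ge h)
    rw [norm_sub_rev η, norm_sub_rev (Vp p η), add_right_comm] at hlo hhi
    exact ⟨hlo, hhi⟩
  obtain ⟨hlo, hhi⟩ := Vp_sub_sq_bounds_of_norm_le hp h
  obtain ⟨hMA, hAM⟩ := rpow_le_two_rpow_abs_mul_rpow ((p - 2) / 2)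
    (A := 1 + ‖ξ‖ ^ 2) (M := 1 + ‖ξ‖ ^ 2 + ‖η‖ ^ 2) (by positivity)
    (by nlinarith [sq_nonneg ‖η‖]) (by nlinarith [pow_le_pow_left₀ (norm_nonneg η) h 2])
  set A := (1 + ‖ξ‖ ^ 2) ^ ((p - 2) / 2)
  set M := (1 + ‖ξ‖ ^ 2 + ‖η‖ ^ 2) ^ ((p - 2) / 2)
  set D := ‖ξ - η‖ ^ 2
  set X := ‖Vp p ξ - Vp p η‖ ^ 2
  constructor
  · rw [mul_assoc, inv_mul_le_iff₀ (by positivity)]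
    calc M * D ≤ κ * A * D := by gcongr
      _ = κ * c⁻¹ * (c * A * D) := by field_simp
      _ ≤ κ * c⁻¹ * X := by gcongr
      _ ≤ κ * (K + c⁻¹) * X := by gcongr; exact le_add_of_nonneg_left (by positivity)
  · calc X ≤ K * A * D := hhi
      _ ≤ K * (κ * M) * D := by gcongr
      _ = κ * K * (M * D) := by ring
      _ ≤ κ * (K + c⁻¹) * (M * D) := by gcongr; exact le_add_of_nonneg_right (by positivity)
      _ = κ * (K + c⁻¹) * M * D := by ring

end InnerProduct

theorem stmt_0_general (n : ℕ) (p : ℝ) (hp : 1 < p) :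
    ∃ C : ℝ, 0 < C ∧ ∀ ξ η : EuclideanSpace ℝ (Fin n), ξ ≠ η →
      C⁻¹ * (1 + ‖ξ‖ ^ 2 + ‖η‖ ^ 2) ^ ((p - 2) / 2) ≤
        ‖((1 + ‖ξ‖ ^ 2) ^ ((p - 2) / 4)) • ξ - ((1 + ‖η‖ ^ 2) ^ ((p - 2) / 4)) • η‖ ^ 2
          / ‖ξ - η‖ ^ 2 ∧
      ‖((1 + ‖ξ‖ ^ 2) ^ ((p - 2) / 4)) • ξ - ((1 + ‖η‖ ^ 2) ^ ((p - 2) / 4)) • η‖ ^ 2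
          / ‖ξ - η‖ ^ 2 ≤
        C * (1 + ‖ξ‖ ^ 2 + ‖η‖ ^ 2) ^ ((p - 2) / 2) := by
  obtain ⟨C, hC, hV⟩ := exists_Vp_sub_sq_comparable (E := EuclideanSpace ℝ (Fin n)) p
    (by linarith)
  refine ⟨C, hC, fun ξ η hne => ?_⟩
  have hD : 0 < ‖ξ - η‖ ^ 2 := by have := sub_ne_zero.2 hne; positivity
  obtain ⟨hlo, hhi⟩ := hV ξ η
  exact ⟨(le_div_iff₀ hD).2 hlo, (div_le_iff₀ hD).2 hhi⟩

/-- comparability of the auxiliary function `V_p`. -/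
theorem stmt_0 (n : ℕ) (hn : 1 ≤ n) (p : ℝ) (hp : 1 < p) :
    ∃ C : ℝ, 0 < C ∧ ∀ ξ η : EuclideanSpace ℝ (Fin n), ξ ≠ η →
      C⁻¹ * (1 + ‖ξ‖ ^ 2 + ‖η‖ ^ 2) ^ ((p - 2) / 2) ≤
        ‖((1 + ‖ξ‖ ^ 2) ^ ((p - 2) / 4)) • ξ - ((1 + ‖η‖ ^ 2) ^ ((p - 2) / 4)) • η‖ ^ 2
          / ‖ξ - η‖ ^ 2 ∧
      ‖((1 + ‖ξ‖ ^ 2) ^ ((p - 2) / 4)) • ξ - ((1 + ‖η‖ ^ 2) ^ ((p - 2) / 4)) • η‖ ^ 2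
          / ‖ξ - η‖ ^ 2 ≤
        C * (1 + ‖ξ‖ ^ 2 + ‖η‖ ^ 2) ^ ((p - 2) / 2) :=
  stmt_0_general n p hp
end

section
/- For every s, t > 0 and for every α, ε, γ > 0, one has s·t ≤ ε·s·(log(e + γ s))^α + (t/γ)·(exp((t/ε)^(1/α)) − 1). -/
open Real

/-- a Young-type inequality with logarithmic and exponential terms. -/
theorem stmt_1 (s t α ε γ : ℝ) (hs : 0 < s) (ht : 0 < t)
    (hα : 0 < α) (hε : 0 < ε) (hγ : 0 < γ) :
    s * t ≤ ε * s * (Real.log (Real.exp 1 + γ * s)) ^ α +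
      (t / γ) * (Real.exp ((t / ε) ^ (1 / α)) - 1) := by
  set L := Real.log (Real.exp 1 + γ * s) with hL
  have hpos : (0:ℝ) < Real.exp 1 + γ * s := by positivity
  have hL1 : 1 ≤ L := by
    rw [hL]
    calc (1:ℝ) = Real.log (Real.exp 1) := (Real.log_exp 1).symm
    _ ≤ _ := Real.log_le_log (Real.exp_pos 1) (by nlinarith)
  have hLpos : 0 < L := lt_of_lt_of_le one_pos hL1
  have hLα : 0 < L ^ α := Real.rpow_pos_of_pos hLpos α
  have hexp1 : (1:ℝ) ≤ Real.exp ((t / ε) ^ (1 / α)) := by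
    rw [show (1:ℝ) = Real.exp 0 from (Real.exp_zero).symm]
    exact Real.exp_le_exp.mpr (Real.rpow_nonneg (le_of_lt (div_pos ht hε)) _)
  by_cases h : t ≤ ε * L ^ α
  · have h1 : s * t ≤ ε * s * L ^ α := by nlinarith
    have h2 : 0 ≤ (t / γ) * (Real.exp ((t / ε) ^ (1 / α)) - 1) := by
      have := div_pos ht hγ
      nlinarith
    linarith
  · push_neg at h
    have hte : L ^ α < t / ε := (lt_div_iff₀ hε).mpr (by linarith [h])
    have hkey : L < (t / ε) ^ (1 / α) := by
      have h1 : (L ^ α) ^ (1 / α) < (t / ε) ^ (1 / α) :=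
        Real.rpow_lt_rpow (le_of_lt hLα) hte (by positivity)
      rwa [← Real.rpow_mul (le_of_lt hLpos),
        mul_one_div_cancel hα.ne', Real.rpow_one] at h1
    have hexp : Real.exp 1 + γ * s < Real.exp ((t / ε) ^ (1 / α)) := by
      calc Real.exp 1 + γ * s = Real.exp L := (Real.exp_log hpos).symm
      _ < _ := Real.exp_lt_exp.mpr hkey
    have he1 : (1:ℝ) < Real.exp 1 := by
      have := Real.add_one_lt_exp (one_ne_zero); linarith
    have h2 : s * t ≤ (t / γ) * (Real.exp ((t / ε) ^ (1 / α)) - 1) := by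
      have hγs : γ * s ≤ Real.exp ((t / ε) ^ (1 / α)) - 1 := by nlinarith
      calc s * t = (t / γ) * (γ * s) := by field_simp
      _ ≤ _ := by
        apply mul_le_mul_of_nonneg_left hγs (le_of_lt (div_pos ht hγ))
    nlinarith [mul_pos (mul_pos hε hs) hLα]
end

section
/- Let s > 1 and 0 < β₁ ≤ β₂ < ∞. There exists a constant c = c(s,β₁,β₂) > 0 such that for every bounded measurable set Ω ⊂ ℝⁿ with positive Lebesgue measure, every β ∈ [β₁,β₂], and every f ∈ L^s(Ω) which is not almost everywhere zero, one has ⨍_Ω |f| [log(e + |f| / ⨍_Ω |f| dx)]^β dx ≤ c (⨍_Ω |f|^s dx)^{1/s}. -/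
open MeasureTheory Real

/-!
Write `B = (⨍ |f|^s)^(1/s)`, `s'` for the conjugate exponent of `s` and
`L = log (e + |f| / ⨍ |f|) ≥ 1`.
Young's inequality applied pointwise to `(|f| / B) · L^β` gives
`|f| L^β ≤ B ((|f| / B)^s / s + L^(β s') / s')`, and from `log v ≤ γ v^(1/γ)` with `γ = β₂ s'`
we get `L^(β s') ≤ L^γ ≤ γ^γ (e + |f| / ⨍ |f|)`, whose average is `γ^γ (e + 1)`.
Averaging therefore yields the bound with `c = 1/s + γ^γ (e + 1) / s'`.
-/

namespace Real

lemma log_rpow_le_rpow_mul {v γ : ℝ} (hv : 1 ≤ v) (hγ : 0 < γ) : log v ^ γ ≤ γ ^ γ * v := by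
  have hv0 : 0 ≤ v := zero_le_one.trans hv
  have hlog : log v ≤ γ * v ^ γ⁻¹ := by
    simpa [div_inv_eq_mul, mul_comm] using log_le_rpow_div hv0 (inv_pos.mpr hγ)
  calc log v ^ γ ≤ (γ * v ^ γ⁻¹) ^ γ := rpow_le_rpow (log_nonneg hv) hlog hγ.le
    _ = γ ^ γ * v := by
      rw [mul_rpow hγ.le (rpow_nonneg hv0 _), ← rpow_mul hv0, inv_mul_cancel₀ hγ.ne', rpow_one]

lemma mul_log_rpow_le {t v B s q β γ : ℝ} (ht : 0 ≤ t) (hv : exp 1 ≤ v) (hB : 0 < B)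
    (hsq : s.HolderConjugate q) (hβγ : β * q ≤ γ) (hγ : 0 < γ) :
    t * log v ^ β ≤ B * ((t / B) ^ s / s + γ ^ γ * v / q) := by
  have hL : 1 ≤ log v := by simpa using log_le_log (exp_pos 1) hv
  have hL0 : 0 ≤ log v := zero_le_one.trans hL
  have hv1 : 1 ≤ v := (one_le_exp zero_le_one).trans hv
  have hpow : (log v ^ β) ^ q ≤ γ ^ γ * v :=
    calc (log v ^ β) ^ q = log v ^ (β * q) := (rpow_mul hL0 _ _).symm
      _ ≤ log v ^ γ := rpow_le_rpow_of_exponent_le hL hβγ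
      _ ≤ γ ^ γ * v := log_rpow_le_rpow_mul hv1 hγ
  calc t * log v ^ β = B * (t / B * log v ^ β) := by field_simp
    _ ≤ B * ((t / B) ^ s / s + (log v ^ β) ^ q / q) := by
      gcongr
      exact young_inequality_of_nonneg (by positivity) (rpow_nonneg hL0 _) hsq
    _ ≤ B * ((t / B) ^ s / s + γ ^ γ * v / q) := by
      gcongr
      exact hsq.symm.pos.le

end Real

namespace MeasureTheory

variable {α : Type*} [MeasurableSpace α] {μ : Measure α}

lemma integral_abs_rpow_pos {f : α → ℝ} {p : ℝ} (hp : 0 < p)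
    (hfp : Integrable (fun x => |f x| ^ p) μ) (hf0 : ¬ f =ᵐ[μ] 0) :
    0 < ∫ x, |f x| ^ p ∂μ := by
  refine (integral_nonneg fun x => by positivity).lt_of_ne' fun h => hf0 ?_
  filter_upwards [(integral_eq_zero_iff_of_nonneg (fun x => by positivity) hfp).mp h] with x hx
  simpa [rpow_eq_zero (abs_nonneg _) hp.ne'] using hx

noncomputable def logYoungConst (s β : ℝ) : ℝ :=
  1 / s + (β * s.conjExponent) ^ (β * s.conjExponent) * (exp 1 + 1) / s.conjExponent

lemma logYoungConst_pos {s β : ℝ} (hs : 1 < s) (hβ : 0 < β) : 0 < logYoungConst s β := by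
  have hq := (Real.HolderConjugate.conjExponent hs).symm.pos
  unfold logYoungConst
  positivity

theorem integral_mul_log_rpow_le [IsProbabilityMeasure μ] {f : α → ℝ} {s β β₂ : ℝ}
    (hs : 1 < s) (hβ₂ : 0 < β₂) (hββ₂ : β ≤ β₂)
    (hf : MemLp f (ENNReal.ofReal s) μ) (hf0 : ¬ f =ᵐ[μ] 0) :
    ∫ x, |f x| * log (exp 1 + |f x| / ∫ y, |f y| ∂μ) ^ β ∂μ ≤
      logYoungConst s β₂ * (∫ x, |f x| ^ s ∂μ) ^ (1 / s) := by
  have hs0 : 0 < s := zero_lt_one.trans hs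
  have hsq := Real.HolderConjugate.conjExponent hs
  set q := s.conjExponent
  set A := ∫ y, |f y| ∂μ
  set B := (∫ x, |f x| ^ s ∂μ) ^ (1 / s)
  have hfA : Integrable (fun x => |f x|) μ := (hf.integrable (by simpa using hs.le)).abs
  have hfs : Integrable (fun x => |f x| ^ s) μ := by
    simpa [ENNReal.toReal_ofReal hs0.le] using
      hf.integrable_norm_rpow (by simpa using hs0) ENNReal.ofReal_ne_top
  have hA : 0 < A := by simpa using integral_abs_rpow_pos zero_lt_one (by simpa using hfA) hf0
  have hIs := integral_abs_rpow_pos hs0 hfs hf0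
  have hB : 0 < B := rpow_pos_of_pos hIs _
  have hBs : B ^ s = ∫ x, |f x| ^ s ∂μ := by
    rw [← rpow_mul hIs.le, one_div_mul_cancel hs0.ne', rpow_one]
  have hv : ∀ x, exp 1 ≤ exp 1 + |f x| / A := fun x => le_add_of_nonneg_right (by positivity)
  have hvi : Integrable (fun x => exp 1 + |f x| / A) μ :=
    (integrable_const _).add (hfA.div_const A)
  have hbound := fun x => mul_log_rpow_le (abs_nonneg (f x)) (hv x) hB hsq
    (mul_le_mul_of_nonneg_right hββ₂ hsq.symm.pos.le) (mul_pos hβ₂ hsq.symm.pos)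
  have hdiv : ∀ x, (|f x| / B) ^ s = |f x| ^ s / B ^ s := fun x => div_rpow (abs_nonneg _) hB.le s
  simp only [hdiv] at hbound
  calc ∫ x, |f x| * log (exp 1 + |f x| / A) ^ β ∂μ
      ≤ ∫ x, B * (|f x| ^ s / B ^ s / s + (β₂ * q) ^ (β₂ * q) * (exp 1 + |f x| / A) / q) ∂μ := by
        refine integral_mono_of_nonneg (.of_forall fun x => ?_) ?_ (.of_forall hbound)
        · exact mul_nonneg (abs_nonneg _)
            (rpow_nonneg (log_nonneg ((one_le_exp zero_le_one).trans (hv x))) _)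
        · exact (((hfs.div_const _).div_const _).add ((hvi.const_mul _).div_const _)).const_mul _
    _ = B * (1 / s + (β₂ * q) ^ (β₂ * q) * (exp 1 + 1) / q) := by
        rw [integral_const_mul, integral_add ((hfs.div_const _).div_const _)
          ((hvi.const_mul _).div_const _), integral_div, integral_div, integral_div,
          integral_const_mul, integral_add (integrable_const _) (hfA.div_const A), integral_div,
          integral_const, ← hBs, div_self (rpow_pos_of_pos hB s).ne', div_self hA.ne']
        simp
    _ = logYoungConst s β₂ * B := mul_comm _ _

theorem average_mul_log_rpow_le [IsFiniteMeasure μ] [NeZero μ] {f : α → ℝ} {s β β₂ : ℝ}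
    (hs : 1 < s) (hβ₂ : 0 < β₂) (hββ₂ : β ≤ β₂)
    (hf : MemLp f (ENNReal.ofReal s) μ) (hf0 : ¬ f =ᵐ[μ] 0) :
    ⨍ x, |f x| * log (exp 1 + |f x| / ⨍ y, |f y| ∂μ) ^ β ∂μ ≤
      logYoungConst s β₂ * (⨍ x, |f x| ^ s ∂μ) ^ (1 / s) := by
  -- `⨍ ∂μ` is by definition `∫ ∂((μ univ)⁻¹ • μ)`, against a probability measure.
  have hc : (μ Set.univ)⁻¹ ≠ 0 := ENNReal.inv_ne_zero.mpr (measure_ne_top _ _)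
  exact integral_mul_log_rpow_le hs hβ₂ hββ₂
    (hf.smul_measure (ENNReal.inv_ne_top.mpr (NeZero.ne _)))
    (by rwa [Filter.EventuallyEq, Measure.ae_ennreal_smul_measure_eq hc])

end MeasureTheory

/-- uniform `L log^β L` bound by the `L^s` average, for β in a compact range. -/
theorem stmt_8 (s β₁ β₂ : ℝ) (hs : 1 < s) (hβ₁ : 0 < β₁) (hβ₁₂ : β₁ ≤ β₂) :
    ∃ c : ℝ, 0 < c ∧ ∀ (n : ℕ) (Ω : Set (EuclideanSpace ℝ (Fin n))),
      MeasurableSet Ω → Bornology.IsBounded Ω → 0 < volume Ω →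
      ∀ β : ℝ, β₁ ≤ β → β ≤ β₂ →
      ∀ f : EuclideanSpace ℝ (Fin n) → ℝ,
        MemLp f (ENNReal.ofReal s) (volume.restrict Ω) →
        ¬ (f =ᵐ[volume.restrict Ω] 0) →
        ⨍ x in Ω, |f x| * (Real.log (Real.exp 1 + |f x| / ⨍ y in Ω, |f y|)) ^ β ≤
          c * (⨍ x in Ω, |f x| ^ s) ^ (1 / s) := by
  have hβ₂ : 0 < β₂ := hβ₁.trans_le hβ₁₂
  refine ⟨logYoungConst s β₂, logYoungConst_pos hs hβ₂, ?_⟩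
  intro n Ω _ hΩb hΩ β _ hββ₂ f hf hf0
  have : IsFiniteMeasure (volume.restrict Ω) := isFiniteMeasure_restrict.mpr hΩb.measure_lt_top.ne
  have : NeZero (volume.restrict Ω) := ⟨by simpa [Measure.restrict_eq_zero] using hΩ.ne'⟩
  exact average_mul_log_rpow_le hs hβ₂ hββ₂ hf hf0
end
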